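/- For 0<q<1, N a natural number, and m = \lfloor N/2 \rfloor, one has \sum_{k=0}^{N} \binom{N}{k}_q q^{k^2 - kN} = \frac{1}{2\pi i} \oint_C F(z) (-q^{-N+1/2}/z ; q)_N \frac{dz}{z}, where C is a positively oriented circle around the origin and F(z) = \sum_{k\in\mathbb{Z}} q^{k^2/2} z^k. -/

import Mathlib

open Real Finset

/-- q-Pochhammer symbol (x;q)_m over ℝ. -/
noncomputable def qPoch (q x : ℝ) (m : ℕ) : ℝ := ∏ j ∈ Finset.range m, (1 - x * q ^ j)

/-- Gaussian (q-)binomial coefficient. -/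
noncomputable def qbinom (q : ℝ) (n k : ℕ) : ℝ :=
  qPoch q q n / (qPoch q q k * qPoch q q (n - k))

/-- q-Pochhammer symbol (x;q)_m over ℂ. -/
noncomputable def qPochC (q x : ℂ) (m : ℕ) : ℂ := ∏ j ∈ Finset.range m, (1 - x * q ^ j)

/-- F(z) = ∑_{k∈ℤ} q^{k²/2} z^k. -/
noncomputable def Fq (q : ℝ) (z : ℂ) : ℂ :=
  ∑' k : ℤ, ((q ^ ((k : ℝ) ^ 2 / 2) : ℝ) : ℂ) * z ^ k

/-!
Expanding `(-q^(-N+1/2)/z; q)_N` by the q-binomial theorem turns the integrand into a finite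
combination of `F(z) / z^(k+1)`. The theta series `F` converges absolutely on every circle around
the origin, so it may be integrated termwise, and `∮ F(z) / z^(k+1) dz` picks out its Laurent
coefficient `2πi q^(k²/2)`. The exponents then combine as
`binom(k,2) + k(1/2 - N) + k²/2 = k² - kN`.
-/

lemma qPochC_succ (q x : ℂ) (m : ℕ) : qPochC q x (m + 1) = qPochC q x m * (1 - x * q ^ m) :=
  prod_range_succ _ _

section QBinomial

variable {q : ℝ}

lemma qPoch_succ (x : ℝ) (m : ℕ) : qPoch q x (m + 1) = qPoch q x m * (1 - x * q ^ m) :=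
  prod_range_succ _ _

lemma qPoch_self_pos (hq0 : 0 ≤ q) (hq1 : q < 1) (m : ℕ) : 0 < qPoch q q m :=
  prod_pos fun j _ => by nlinarith [pow_le_one₀ (n := j) hq0 hq1.le]

lemma qbinom_zero_right {n : ℕ} (hn : qPoch q q n ≠ 0) : qbinom q n 0 = 1 := by
  simpa [qbinom, qPoch] using div_self hn

lemma qbinom_self {n : ℕ} (hn : qPoch q q n ≠ 0) : qbinom q n n = 1 := by
  simpa [qbinom, qPoch] using div_self hn

lemma qbinom_succ_succ (hq : ∀ m, qPoch q q m ≠ 0) {n k : ℕ} (hk : k < n) :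
    qbinom q (n + 1) (k + 1) = qbinom q n (k + 1) + q ^ (n - k) * qbinom q n k := by
  obtain ⟨d, rfl⟩ : ∃ d, n = k + d + 1 := ⟨n - k - 1, by omega⟩
  have hk1 := hq (k + 1)
  have hd1 := hq (d + 1)
  rw [qPoch_succ] at hk1 hd1
  simp only [qbinom, show k + d + 1 + 1 - (k + 1) = d + 1 by omega,
    show k + d + 1 - (k + 1) = d by omega, show k + d + 1 - k = d + 1 by omega, qPoch_succ]
  field_simp [hq (k + d + 1), left_ne_zero_of_mul hk1, right_ne_zero_of_mul hk1,
    left_ne_zero_of_mul hd1, right_ne_zero_of_mul hd1]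
  ring

lemma qbinom_mul_pow_choose_succ_succ (hq : ∀ m, qPoch q q m ≠ 0) {n k : ℕ} (hk : k < n) :
    qbinom q (n + 1) (k + 1) * q ^ (k + 1).choose 2 =
      qbinom q n (k + 1) * q ^ (k + 1).choose 2 + q ^ n * (qbinom q n k * q ^ k.choose 2) := by
  rw [qbinom_succ_succ hq hk, Nat.choose_succ_succ', Nat.choose_one_right, pow_add,
    ← pow_sub_mul_pow q hk.le]
  ring

theorem qPochC_eq_sum (hq : ∀ m, qPoch q q m ≠ 0) (n : ℕ) (w : ℂ) :
    qPochC q w n =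
      ∑ k ∈ range (n + 1), ((qbinom q n k * q ^ k.choose 2 : ℝ) : ℂ) * (-w) ^ k := by
  induction n with
  | zero => simp [qPochC, qbinom_zero_right (hq 0)]
  | succ n ih =>
    rw [qPochC_succ, ih, show 1 - w * (q : ℂ) ^ n = 1 + q ^ n * -w by ring]
    generalize -w = x
    set c : ℕ → ℕ → ℂ := fun n k => ((qbinom q n k * q ^ k.choose 2 : ℝ) : ℂ)
    have hlow : c (n + 1) 0 = c n 0 := by
      simp [c, qbinom_zero_right (hq _)]
    have hmid : ∀ k ∈ range n, c (n + 1) (k + 1) = c n (k + 1) + q ^ n * c n k := fun k hk => by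
      simp only [c]; exact_mod_cast qbinom_mul_pow_choose_succ_succ hq (mem_range.1 hk)
    have htop : c (n + 1) (n + 1) = q ^ n * c n n := by
      simp only [c, qbinom_self (hq _), Nat.choose_succ_succ', Nat.choose_one_right]
      push_cast; ring
    have hS : ∑ k ∈ range (n + 1), c n k * x ^ k =
        c n 0 + ∑ k ∈ range n, c n (k + 1) * x ^ (k + 1) := by
      rw [sum_range_succ', add_comm, pow_zero, mul_one]
    have hSx : (∑ k ∈ range (n + 1), c n k * x ^ k) * (q ^ n * x) =
        ∑ k ∈ range n, q ^ n * c n k * x ^ (k + 1) + q ^ n * c n n * x ^ (n + 1) := by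
      rw [sum_mul, sum_range_succ]
      exact congrArg₂ (· + ·) (sum_congr rfl fun k _ => by ring) (by ring)
    rw [mul_one_add, hSx, hS, sum_range_succ' (fun k => c (n + 1) k * x ^ k),
      sum_range_succ (fun k => c (n + 1) (k + 1) * x ^ (k + 1)), sum_congr rfl fun k hk =>
        congrArg (· * x ^ (k + 1)) (hmid k hk), hlow, htop]
    simp only [add_mul, sum_add_distrib]
    ring

end QBinomial

section LaurentSeries

open Metric Complex

theorem hasSum_circleIntegral_of_norm_le {E ι : Type*} [NormedAddCommGroup E] [NormedSpace ℂ E]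
    [CompleteSpace E] [Countable ι] {f : ι → ℂ → E} {u : ι → ℝ} {c : ℂ} {R : ℝ}
    (hf : ∀ i, ContinuousOn (f i) (sphere c |R|)) (hu : Summable u)
    (hfu : ∀ i, ∀ z ∈ sphere c |R|, ‖f i z‖ ≤ u i) :
    HasSum (fun i => ∮ z in C(c, R), f i z) (∮ z in C(c, R), ∑' i, f i z) := by
  simp only [circleIntegral, deriv_circleMap]
  refine intervalIntegral.hasSum_integral_of_dominated_convergence (fun i _ => |R| * u i)
    (fun i => ?_) (fun i => ?_) (.of_forall fun _ _ => hu.mul_left _) intervalIntegrable_const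
    (.of_forall fun θ _ => ?_)
  · exact (((continuous_circleMap 0 R).mul continuous_const).smul ((hf i).comp_continuous
      (continuous_circleMap c R) (circleMap_mem_sphere' c R))).aestronglyMeasurable
  · refine .of_forall fun θ _ => ?_
    rw [norm_smul, norm_mul, norm_circleMap_zero, norm_I, mul_one]
    exact mul_le_mul_of_nonneg_left (hfu i _ (circleMap_mem_sphere' c R θ)) (abs_nonneg R)
  · exact (hu.of_norm_bounded fun i => hfu i _ (circleMap_mem_sphere' c R θ)).hasSum.const_smul _

theorem circleIntegral_zpow {R : ℝ} (hR : R ≠ 0) (n : ℤ) :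
    (∮ z in C(0, R), z ^ n) = if n = -1 then 2 * π * I else 0 := by
  split_ifs with h
  · simpa [h] using circleIntegral.integral_sub_center_inv 0 hR
  · simpa using circleIntegral.integral_sub_zpow_of_ne h 0 0 R

theorem continuousOn_mul_zpow_sphere (a : ℂ) (m : ℤ) {R : ℝ} (hR : 0 < R) :
    ContinuousOn (fun z : ℂ => a * z ^ m) (sphere 0 R) :=
  continuousOn_const.mul <| continuousOn_id.zpow₀ m fun _ hz =>
    .inl (ne_of_mem_sphere hz hR.ne')

variable {a : ℤ → ℂ} {R : ℝ}

theorem continuousOn_tsum_mul_zpow (hR : 0 < R) (ha : Summable fun m => ‖a m‖ * R ^ m) :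
    ContinuousOn (fun z => ∑' m, a m * z ^ m) (sphere 0 R) :=
  continuousOn_tsum (fun m => continuousOn_mul_zpow_sphere (a m) m hR) ha fun m z hz => by
    rw [norm_mul, norm_zpow, mem_sphere_zero_iff_norm.1 hz]

theorem circleIntegral_tsum_mul_zpow_div (hR : 0 < R) (ha : Summable fun m => ‖a m‖ * R ^ m)
    (k : ℤ) : (∮ z in C(0, R), (∑' m, a m * z ^ m) / z ^ (k + 1)) = 2 * π * I * a k := by
  have hsum := hasSum_circleIntegral_of_norm_le (c := 0) (R := R)
    (f := fun m z => a m * z ^ (m - (k + 1))) (u := fun m => ‖a m‖ * R ^ m / R ^ (k + 1))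
    (fun m => by simpa [abs_of_pos hR] using continuousOn_mul_zpow_sphere (a m) (m - (k + 1)) hR)
    (ha.div_const _)
    (fun m z hz => by
      rw [abs_of_pos hR, mem_sphere_zero_iff_norm] at hz
      rw [norm_mul, norm_zpow, hz, zpow_sub₀ hR.ne', mul_div_assoc])
  have hterm : ∀ m, (∮ z in C(0, R), a m * z ^ (m - (k + 1))) =
      if m = k then 2 * π * I * a k else 0 := by
    intro m
    rw [circleIntegral.integral_const_mul, circleIntegral_zpow hR.ne']
    simp only [show m - (k + 1) = -1 ↔ m = k by omega]
    split_ifs with hm <;> simp [hm, mul_comm]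
  have hintegrand : (∮ z in C(0, R), (∑' m, a m * z ^ m) / z ^ (k + 1)) =
      ∮ z in C(0, R), ∑' m, a m * z ^ (m - (k + 1)) := by
    refine circleIntegral.integral_congr hR.le fun z hz => ?_
    simp only [zpow_sub₀ (ne_of_mem_sphere hz hR.ne'), mul_div_assoc', tsum_div_const]
  rw [hintegrand, hsum.unique ((hasSum_ite_eq k _).congr_fun hterm)]

end LaurentSeries

section Theta

variable {q : ℝ}

theorem summable_rpow_sq_div_two_mul_zpow (hq0 : 0 < q) (hq1 : q < 1) {s : ℝ} (hs : 0 < s) :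
    Summable fun m : ℤ => q ^ ((m : ℝ) ^ 2 / 2) * s ^ m := by
  -- `q ^ (m ^ 2 / 2) * s ^ m` is the norm of the `m`-th Jacobi theta term at
  -- `τ = i (-log q / 2π)`, `z = i (-log s / 2π)`.
  have hτ : 0 < (((-Real.log q / (2 * π) : ℝ) : ℂ) * Complex.I).im := by
    rw [Complex.mul_I_im, Complex.ofReal_re]
    exact div_pos (neg_pos.2 (Real.log_neg hq0 hq1)) (by positivity)
  refine ((summable_jacobiTheta₂_term_iff
    (((-Real.log s / (2 * π) : ℝ) : ℂ) * Complex.I) _).2 hτ).norm.congr fun m => ?_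
  rw [norm_jacobiTheta₂_term, ← Real.rpow_intCast, Real.rpow_def_of_pos hq0,
    Real.rpow_def_of_pos hs, ← Real.exp_add]
  simp only [Complex.mul_I_im, Complex.ofReal_re]
  field_simp
  ring_nf

theorem summable_norm_mul_pow_Fq_coeff (hq0 : 0 < q) (hq1 : q < 1) {R : ℝ} (hR : 0 < R) :
    Summable fun m : ℤ => ‖((q ^ ((m : ℝ) ^ 2 / 2) : ℝ) : ℂ)‖ * R ^ m := by
  simpa [abs_of_pos (Real.rpow_pos_of_pos hq0 _)] using
    summable_rpow_sq_div_two_mul_zpow hq0 hq1 hR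

theorem continuousOn_Fq (hq0 : 0 < q) (hq1 : q < 1) {R : ℝ} (hR : 0 < R) :
    ContinuousOn (Fq q) (Metric.sphere 0 R) :=
  continuousOn_tsum_mul_zpow hR (summable_norm_mul_pow_Fq_coeff hq0 hq1 hR)

theorem circleIntegrable_Fq_div_pow (hq0 : 0 < q) (hq1 : q < 1) {R : ℝ} (hR : 0 < R) (k : ℕ) :
    CircleIntegrable (fun z => Fq q z / z ^ (k + 1)) 0 R :=
  ((continuousOn_Fq hq0 hq1 hR).div (continuousOn_pow _) fun _ hz =>
    pow_ne_zero _ (Metric.ne_of_mem_sphere hz hR.ne')).circleIntegrable hR.le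

theorem circleIntegral_Fq_div_pow (hq0 : 0 < q) (hq1 : q < 1) {R : ℝ} (hR : 0 < R) (k : ℕ) :
    (∮ z in C(0, R), Fq q z / z ^ (k + 1)) =
      2 * π * Complex.I * ((q ^ ((k : ℝ) ^ 2 / 2) : ℝ) : ℂ) := by
  have h := circleIntegral_tsum_mul_zpow_div hR (summable_norm_mul_pow_Fq_coeff hq0 hq1 hR) k
  simp only [← Nat.cast_add_one, zpow_natCast, Int.cast_natCast] at h
  exact h

end Theta

theorem pow_choose_two_mul_rpow_pow_mul_rpow {q : ℝ} (hq : 0 < q) (N k : ℕ) :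
    q ^ k.choose 2 * (q ^ (-(N : ℝ) + 1 / 2)) ^ k * q ^ ((k : ℝ) ^ 2 / 2) =
      q ^ ((k : ℤ) ^ 2 - k * N) := by
  rw [← Real.rpow_natCast, ← Real.rpow_natCast _ k, ← Real.rpow_mul hq.le,
    ← Real.rpow_add hq, ← Real.rpow_add hq, ← Real.rpow_intCast, Nat.cast_choose_two]
  push_cast
  ring_nf

theorem stmt11 (q : ℝ) (hq0 : 0 < q) (hq1 : q < 1) (N : ℕ) (r : ℝ) (hr : 0 < r) :
    (∑ k ∈ Finset.range (N + 1), ((qbinom q N k : ℝ) : ℂ) * (q : ℂ) ^ ((k : ℤ) ^ 2 - k * N)) =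
      (2 * Real.pi * Complex.I)⁻¹ *
        ∮ z in C(0, r),
          Fq q z * qPochC (q : ℂ) (-(((q ^ (-(N : ℝ) + 1 / 2) : ℝ) : ℂ)) / z) N / z := by
  set c : ℕ → ℂ := fun k =>
    ((qbinom q N k * q ^ k.choose 2 * (q ^ (-(N : ℝ) + 1 / 2)) ^ k : ℝ) : ℂ)
  have hq : ∀ m, qPoch q q m ≠ 0 := fun m => (qPoch_self_pos hq0.le hq1 m).ne'
  have hexpand :
      (fun z => Fq q z * qPochC q (-(((q ^ (-(N : ℝ) + 1 / 2) : ℝ) : ℂ)) / z) N / z) =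
      fun z => ∑ k ∈ range (N + 1), c k * (Fq q z / z ^ (k + 1)) := by
    funext z
    rw [qPochC_eq_sum hq, mul_sum, sum_div]
    refine sum_congr rfl fun k _ => ?_
    simp only [c, neg_div, neg_neg, div_pow]
    push_cast
    ring
  rw [hexpand, circleIntegral.integral_fun_sum (f := fun k z => c k * (Fq q z / z ^ (k + 1)))
    fun k _ => (circleIntegrable_Fq_div_pow hq0 hq1 hr k).const_mul (c k), mul_sum]
  refine sum_congr rfl fun k _ => ?_
  rw [circleIntegral.integral_const_mul, circleIntegral_Fq_div_pow hq0 hq1 hr,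
    mul_left_comm (c k), inv_mul_cancel_left₀ Complex.two_pi_I_ne_zero, ← Complex.ofReal_zpow,
    ← pow_choose_two_mul_rpow_pow_mul_rpow hq0]
  simp only [c, Complex.ofReal_mul]
  ring
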